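/- arXiv:1607.03746 — 6 statements merged into one kernel-verified Lean document; each statement's English description precedes it below -/
import Mathlib

section
/- For every integer n ≥ 0, every integer r ≥ 1, all integers k_1,…,k_r, all positive reals a, b, c with ab > 1, every real x, and every integer s ≥ 1, the generalized multi poly-Bernoulli polynomials satisfy B_n^{(k_1,…,k_r)}(x;a,b,c) = ∑_{m=0}^{n} C(n,m) ∑_{l=0}^{n−m} [C(n−m,l)/C(l+s,l)] · S(l+s,s) · B_{n−m−l}^{(k_1,…,k_r)}(0;a,b) · B_m^{(s)}(x·r·ln c), where S denotes the Stirling number of the second kind and B_m^{(s)}(y) are the Bernoulli polynomials of order s defined by (t/(e^t−1))^s e^{yt} = ∑_{m≥0} B_m^{(s)}(y) t^m/m!. -/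
open Nat Finset

/-- The multiple polylogarithm. -/
noncomputable def multiPolylog (r : ℕ) (k : Fin r → ℤ) (z : ℝ) : ℝ :=
  ∑' m : Fin r → ℕ, if StrictMono m ∧ ∀ i, 0 < m i then
    z ^ (Finset.univ.sup m) / ∏ j, ((m j : ℝ) ^ (k j)) else 0

/-- Stirling numbers of the second kind. -/
def stirling2 : ℕ → ℕ → ℕ
  | 0, 0 => 1
  | 0, _ + 1 => 0
  | _ + 1, 0 => 0
  | n + 1, k + 1 => (k + 1) * stirling2 n (k + 1) + stirling2 n k

/-!
The exponential generating function of `B_n(x; a, b, c)` is `G(t) e^{yt}` with `y = r x log c`,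
where `G` is that of `B_n(a, b)`. Insert `1 = ((e^t - 1)/t)^s · (t/(e^t - 1))^s`: the Taylor
coefficients of `((e^t - 1)/t)^s` are `s! S(l+s, s)/(l+s)!` (expand `(e^t - 1)^s` by the binomial
theorem and use `k! S(n, k) = ∑ (-1)^(k+j) C(k, j) j^n`), and `(t/(e^t - 1))^s e^{yt}` generates
`B^{(s)}_m(y)`. Comparing coefficients in the Cauchy product of the three series gives the formula;
the comparison is legitimate because two power series agreeing on a punctured neighbourhood of `0`
have the same coefficients, by the identity theorem for analytic functions.
-/

open Filter Topology FormalMultilinearSeries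

section PowerSeriesNearZero

variable {𝕜 : Type*} [NontriviallyNormedField 𝕜]

/-- The value at `0` is left free: generating functions such as `t / (exp t - 1)` are only
meaningful for `t ≠ 0`. -/
def HasPowerSeriesNearZero (c : ℕ → 𝕜) (f : 𝕜 → 𝕜) : Prop :=
  ∀ᶠ t in 𝓝[≠] 0, HasSum (fun n => c n * t ^ n) (f t)

namespace HasPowerSeriesNearZero

variable {c d : ℕ → 𝕜} {f g : 𝕜 → 𝕜}

theorem congr (h : HasPowerSeriesNearZero c f) (hfg : ∀ᶠ t in 𝓝[≠] 0, f t = g t) :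
    HasPowerSeriesNearZero c g := by
  filter_upwards [h, hfg] with t ht hft
  rwa [← hft]

theorem sub (hf : HasPowerSeriesNearZero c f) (hg : HasPowerSeriesNearZero d g) :
    HasPowerSeriesNearZero (c - d) (f - g) := by
  filter_upwards [hf, hg] with t hft hgt
  simpa [sub_mul] using hft.sub hgt

theorem radius_pos (h : HasPowerSeriesNearZero c f) : 0 < (ofScalars 𝕜 c).radius := by
  obtain ⟨t, ht, ht0⟩ := (h.and self_mem_nhdsWithin).exists
  have hlim :
      Tendsto (fun n => ‖ofScalars 𝕜 c n‖ * (‖t‖₊ : ℝ) ^ n) atTop (𝓝 0) := by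
    simpa [ofScalars_norm, norm_mul, norm_pow] using ht.summable.tendsto_atTop_zero.norm
  exact lt_of_lt_of_le (by simpa using ht0) ((ofScalars 𝕜 c).le_radius_of_tendsto hlim)

theorem eventually_summable_norm (h : HasPowerSeriesNearZero c f) :
    ∀ᶠ t in 𝓝 0, Summable fun n => ‖c n * t ^ n‖ := by
  filter_upwards [Metric.eball_mem_nhds (0 : 𝕜) h.radius_pos] with t ht
  simpa [ofScalars_apply_eq, mul_comm] using (ofScalars 𝕜 c).summable_norm_apply ht

theorem mul [CompleteSpace 𝕜] (hf : HasPowerSeriesNearZero c f)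
    (hg : HasPowerSeriesNearZero d g) :
    HasPowerSeriesNearZero (fun n => ∑ kl ∈ antidiagonal n, c kl.1 * d kl.2) (f * g) := by
  filter_upwards [hf, hg, nhdsWithin_le_nhds hf.eventually_summable_norm,
    nhdsWithin_le_nhds hg.eventually_summable_norm] with t hft hgt hfn hgn
  have hprod := (summable_norm_sum_mul_antidiagonal_of_summable_norm hfn hgn).of_norm.hasSum
  rw [← tsum_mul_tsum_eq_tsum_sum_antidiagonal_of_summable_norm hfn hgn, hft.tsum_eq,
    hgt.tsum_eq] at hprod
  have hterm : ∀ n, (∑ kl ∈ antidiagonal n, c kl.1 * d kl.2) * t ^ n =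
      ∑ kl ∈ antidiagonal n, c kl.1 * t ^ kl.1 * (d kl.2 * t ^ kl.2) := fun n => by
    rw [sum_mul]
    refine sum_congr rfl fun kl hkl => ?_
    rw [← mem_antidiagonal.1 hkl, pow_add]
    ring
  simp only [hterm, Pi.mul_apply]
  exact hprod

theorem eq_zero [CompleteSpace 𝕜] (h : HasPowerSeriesNearZero c 0) : c = 0 := by
  have hp := (ofScalars 𝕜 c).hasFPowerSeriesOnBall h.radius_pos
  have hzero : ∀ᶠ t in 𝓝 0, (ofScalars 𝕜 c).sum t = 0 := by
    refine hp.analyticAt.frequently_zero_iff_eventually_zero.1 (Eventually.frequently ?_)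
    filter_upwards [h] with t ht
    simpa [FormalMultilinearSeries.sum, ofScalars_apply_eq, mul_comm] using ht.tsum_eq
  exact (ofScalars_series_eq_zero 𝕜).1 (hp.hasFPowerSeriesAt.eq_zero_of_eventually hzero)

theorem unique [CompleteSpace 𝕜] (hc : HasPowerSeriesNearZero c f)
    (hd : HasPowerSeriesNearZero d f) : c = d :=
  sub_eq_zero.1 (sub_self f ▸ hc.sub hd).eq_zero

end HasPowerSeriesNearZero

end PowerSeriesNearZero

theorem stirling2_eq_stirlingSecond : ∀ n k, stirling2 n k = stirlingSecond n k
  | 0, 0 | 0, _ + 1 | _ + 1, 0 => rfl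
  | n + 1, k + 1 => by
    rw [stirling2, stirlingSecond_succ_succ, stirling2_eq_stirlingSecond n (k + 1),
      stirling2_eq_stirlingSecond n k]

theorem mul_choose_succ_add_mul_choose (k j : ℕ) :
    j * (k + 1).choose j + (k + 1) * k.choose j = (k + 1) * (k + 1).choose j := by
  cases j with
  | zero => simp
  | succ j =>
    rw [mul_comm (j + 1), ← add_one_mul_choose_eq, choose_succ_succ']
    ring

theorem factorial_mul_stirlingSecond {R : Type*} [CommRing R] (n k : ℕ) :
    (k ! * stirlingSecond n k : R) =
      ∑ j ∈ range (k + 1), (-1 : R) ^ (k + j) * k.choose j * (j : R) ^ n := by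
  induction n generalizing k with
  | zero =>
    cases k with
    | zero => simp
    | succ k =>
      have h := congrArg (Int.cast : ℤ → R) (Int.alternating_sum_range_choose (n := k + 1))
      push_cast at h
      simp only [stirlingSecond_zero_succ, cast_zero, mul_zero, pow_zero, mul_one, pow_add,
        mul_assoc, ← mul_sum, h]
  | succ n ih =>
    cases k with
    | zero => simp
    | succ k =>
      have hterm : ∀ j : ℕ, (-1 : R) ^ (k + 1 + j) * (k + 1).choose j * (j : R) ^ (n + 1) =
          (k + 1) * ((-1 : R) ^ (k + 1 + j) * (k + 1).choose j * (j : R) ^ n +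
            (-1 : R) ^ (k + j) * k.choose j * (j : R) ^ n) := fun j => by
        have h := congrArg (Nat.cast : ℕ → R) (mul_choose_succ_add_mul_choose k j)
        push_cast at h
        linear_combination (-(-1 : R) ^ (k + j) * (j : R) ^ n) * h
      have htrunc : ∑ j ∈ range (k + 2), (-1 : R) ^ (k + j) * k.choose j * (j : R) ^ n =
          ∑ j ∈ range (k + 1), (-1 : R) ^ (k + j) * k.choose j * (j : R) ^ n := by
        simp [sum_range_succ _ (k + 1)]
      rw [sum_congr rfl fun j _ => hterm j, ← mul_sum, sum_add_distrib, htrunc, ← ih, ← ih,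
        stirlingSecond_succ_succ, factorial_succ]
      push_cast
      ring

theorem exp_sub_one_pow_eq_sum (k : ℕ) (t : ℝ) :
    (Real.exp t - 1) ^ k =
      ∑ j ∈ range (k + 1), (-1 : ℝ) ^ (k + j) * k.choose j * Real.exp (j * t) := by
  calc (Real.exp t - 1) ^ k = (-1) ^ k * (-Real.exp t + 1) ^ k := by rw [← mul_pow]; ring_nf
    _ = _ := by
      rw [add_pow, mul_sum]
      refine sum_congr rfl fun j _ => ?_
      rw [neg_pow (Real.exp t), ← Real.exp_nat_mul, pow_add]
      ring

theorem hasSum_exp_sub_one_pow (k : ℕ) (t : ℝ) :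
    HasSum (fun n => (k ! * stirlingSecond n k : ℝ) / n ! * t ^ n) ((Real.exp t - 1) ^ k) := by
  rw [exp_sub_one_pow_eq_sum]
  have hexp (x : ℝ) : HasSum (fun n => x ^ n / n !) (Real.exp x) :=
    Real.exp_eq_exp_ℝ ▸ NormedSpace.expSeries_div_hasSum_exp x
  have hterm (n : ℕ) : (k ! * stirlingSecond n k : ℝ) / n ! * t ^ n =
      ∑ j ∈ range (k + 1), (-1 : ℝ) ^ (k + j) * k.choose j * ((j * t) ^ n / n !) := by
    rw [factorial_mul_stirlingSecond, sum_div, sum_mul]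
    refine sum_congr rfl fun j _ => ?_
    ring
  simp only [hterm]
  exact hasSum_sum fun (j : ℕ) _ => (hexp (j * t)).mul_left ((-1 : ℝ) ^ (k + j) * k.choose j)

theorem hasPowerSeriesNearZero_exp_sub_one_div_pow (k : ℕ) :
    HasPowerSeriesNearZero (fun l => (k ! * stirlingSecond (l + k) k : ℝ) / (l + k)!)
      (fun t => ((Real.exp t - 1) / t) ^ k) := by
  filter_upwards [self_mem_nhdsWithin] with t (ht : t ≠ 0)
  have hshift := (hasSum_nat_add_iff' k).2 (hasSum_exp_sub_one_pow k t)
  rw [sum_eq_zero fun i hi => by rw [stirlingSecond_eq_zero_of_lt (mem_range.1 hi)]; simp,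
    sub_zero] at hshift
  have hterm (l : ℕ) : (k ! * stirlingSecond (l + k) k : ℝ) / (l + k)! * t ^ l =
      (k ! * stirlingSecond (l + k) k : ℝ) / (l + k)! * t ^ (l + k) / t ^ k := by
    rw [pow_add]
    field_simp
  simpa only [hterm, div_pow] using hshift.div_const (t ^ k)

theorem div_exp_sub_one_pow_mul_pow {t : ℝ} (ht : t ≠ 0) (s : ℕ) :
    (t / (Real.exp t - 1)) ^ s * ((Real.exp t - 1) / t) ^ s = 1 := by
  have he : Real.exp t - 1 ≠ 0 := sub_ne_zero.2 ((Real.exp_eq_one_iff t).not.2 ht)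
  rw [← mul_pow, div_mul_div_cancel₀ he, div_self ht, one_pow]

theorem hasPowerSeriesNearZero_of_hasSum_div_factorial {b : ℕ → ℝ} {F : ℝ → ℝ}
    (h : ∃ ε > 0, ∀ t : ℝ, t ≠ 0 → |t| < ε →
      HasSum (fun n => b n * t ^ n / n !) (F t)) :
    HasPowerSeriesNearZero (fun n => b n / n !) F := by
  obtain ⟨ε, hε, h⟩ := h
  filter_upwards [self_mem_nhdsWithin, nhdsWithin_le_nhds (Metric.ball_mem_nhds 0 hε)]
    with t ht htε
  simpa only [div_mul_eq_mul_div] using h t ht (by simpa using htε)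

theorem factorial_mul_sum_antidiagonal_eq_sum_choose (u v w : ℕ → ℝ) (s n : ℕ) :
    n ! * ∑ mi ∈ antidiagonal n, w mi.1 / mi.1 ! *
        ∑ lj ∈ antidiagonal mi.2, s ! * v lj.1 / (lj.1 + s)! * (u lj.2 / lj.2 !) =
      ∑ m ∈ range (n + 1), (n.choose m : ℝ) * ∑ l ∈ range (n - m + 1),
        ((n - m).choose l : ℝ) / (l + s).choose l * v l * u (n - m - l) * w m := by
  simp only [Nat.sum_antidiagonal_eq_sum_range_succ_mk, mul_sum]
  refine sum_congr rfl fun m hm => sum_congr rfl fun l hl => ?_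
  have hmn := mem_range_succ_iff.1 hm
  have hl := mem_range_succ_iff.1 hl
  rw [cast_choose ℝ hmn, cast_choose ℝ hl, cast_choose ℝ (le_add_right l s),
    Nat.add_sub_cancel_left]
  field_simp

theorem statement1_general
    (r : ℕ) (k : Fin r → ℤ)
    (a b : ℝ)
    (B : ℝ → ℝ → ℕ → ℝ)
    (hB : ∀ c : ℝ, 0 < c → ∀ x : ℝ, ∃ ε > 0, ∀ t : ℝ, t ≠ 0 → |t| < ε →
      HasSum (fun n : ℕ => B c x n * t ^ n / (n ! : ℝ))
        (multiPolylog r k (1 - (a * b) ^ (-t)) / (b ^ t - a ^ (-t)) ^ r *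
          c ^ ((r : ℝ) * x * t)))
    (s : ℕ)
    (Bs : ℝ → ℕ → ℝ)
    (hBs : ∀ y : ℝ, ∃ ε > 0, ∀ t : ℝ, t ≠ 0 → |t| < ε →
      HasSum (fun m : ℕ => Bs y m * t ^ m / (m ! : ℝ))
        ((t / (Real.exp t - 1)) ^ s * Real.exp (y * t)))
    (c : ℝ) (hc : 0 < c) (x : ℝ) (n : ℕ) :
    B c x n = ∑ m ∈ Finset.range (n + 1), (n.choose m : ℝ) *
      ∑ l ∈ Finset.range (n - m + 1),
        (((n - m).choose l : ℝ) / ((l + s).choose l : ℝ)) * (stirling2 (l + s) s : ℝ) *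
          B (Real.exp 1) 0 (n - m - l) * Bs (x * (r : ℝ) * Real.log c) m := by
  set y := x * (r : ℝ) * Real.log c with hy
  set L : ℝ → ℝ := fun t => multiPolylog r k (1 - (a * b) ^ (-t)) / (b ^ t - a ^ (-t)) ^ r
  have hpow (t : ℝ) : c ^ ((r : ℝ) * x * t) = Real.exp (y * t) := by
    rw [Real.rpow_def_of_pos hc, hy]
    ring_nf
  have hBc : HasPowerSeriesNearZero (fun n => B c x n / n !) fun t => L t * Real.exp (y * t) :=
    hasPowerSeriesNearZero_of_hasSum_div_factorial (by simpa only [hpow] using hB c hc x)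
  have hL : HasPowerSeriesNearZero (fun n => B (Real.exp 1) 0 n / n !) L :=
    hasPowerSeriesNearZero_of_hasSum_div_factorial
      (by simpa [L] using hB (Real.exp 1) (Real.exp_pos 1) 0)
  have hprod := (hasPowerSeriesNearZero_of_hasSum_div_factorial (hBs y)).mul
    ((hasPowerSeriesNearZero_exp_sub_one_div_pow s).mul hL)
  have hcancel : ∀ᶠ t in 𝓝[≠] 0, ((t / (Real.exp t - 1)) ^ s * Real.exp (y * t)) *
      (((Real.exp t - 1) / t) ^ s * L t) = L t * Real.exp (y * t) := by
    filter_upwards [self_mem_nhdsWithin] with t (ht : t ≠ 0)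
    linear_combination L t * Real.exp (y * t) * div_exp_sub_one_pow_mul_pow ht s
  have hcoeff := congrFun ((hprod.congr hcancel).unique hBc) n
  rw [eq_div_iff (cast_ne_zero.2 (factorial_ne_zero n))] at hcoeff
  rw [← hcoeff, mul_comm, factorial_mul_sum_antidiagonal_eq_sum_choose (B (Real.exp 1) 0)
    (fun l => stirlingSecond (l + s) s) (Bs y)]
  simp only [stirling2_eq_stirlingSecond]

/-- expression of the generalized multi poly-Bernoulli polynomials in terms of
Bernoulli polynomials of order `s` and Stirling numbers of the second kind. -/
theorem statement1
    (r : ℕ) (hr : 1 ≤ r) (k : Fin r → ℤ)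
    (a b : ℝ) (ha : 0 < a) (hb : 0 < b) (hab : 1 < a * b)
    (B : ℝ → ℝ → ℕ → ℝ)
    (hB : ∀ c : ℝ, 0 < c → ∀ x : ℝ, ∃ ε > 0, ∀ t : ℝ, t ≠ 0 → |t| < ε →
      HasSum (fun n : ℕ => B c x n * t ^ n / (n ! : ℝ))
        (multiPolylog r k (1 - (a * b) ^ (-t)) / (b ^ t - a ^ (-t)) ^ r *
          c ^ ((r : ℝ) * x * t)))
    (s : ℕ) (hs : 1 ≤ s)
    (Bs : ℝ → ℕ → ℝ)
    (hBs : ∀ y : ℝ, ∃ ε > 0, ∀ t : ℝ, t ≠ 0 → |t| < ε →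
      HasSum (fun m : ℕ => Bs y m * t ^ m / (m ! : ℝ))
        ((t / (Real.exp t - 1)) ^ s * Real.exp (y * t)))
    (c : ℝ) (hc : 0 < c) (x : ℝ) (n : ℕ) :
    B c x n = ∑ m ∈ Finset.range (n + 1), (n.choose m : ℝ) *
      ∑ l ∈ Finset.range (n - m + 1),
        (((n - m).choose l : ℝ) / ((l + s).choose l : ℝ)) * (stirling2 (l + s) s : ℝ) *
          B (Real.exp 1) 0 (n - m - l) * Bs (x * (r : ℝ) * Real.log c) m :=
  statement1_general r k a b B hB s Bs hBs c hc x n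
end

section
/- For every integer n ≥ 0, every integer r ≥ 1, all integers k_1,…,k_r, all positive reals a, b, c with ab > 1, every real x, every integer s ≥ 1, and every real λ ≠ 1, the generalized multi poly-Bernoulli polynomials satisfy B_n^{(k_1,…,k_r)}(x;a,b,c) = ∑_{m=0}^{n} [C(n,m)/(1−λ)^s] ∑_{j=0}^{s} C(s,j)(−λ)^{s−j} · B_{n−m}^{(k_1,…,k_r)}(j/r; a,b) · H_m^{(s)}(x·r·ln c; λ), where H_m^{(s)}(y;λ) are the higher-order Frobenius–Euler polynomials defined by ((1−λ)/(e^t−λ))^s e^{yt} = ∑_{m≥0} H_m^{(s)}(y;λ) t^m/m!. -/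
/-!
Both sides are coefficients of exponential generating functions. With
`F t = Li_k(1 - (ab)^(-t)) / (b^t - a^(-t))^r` and `y = x r log c`, the left side has generating
function `F t * exp (y t)`, and by the binomial theorem
`∑ j, C(s,j) (-λ)^(s-j) B_q(j/r; a, b)` has generating function `F t * (exp t - λ)^s`.
Multiplying by the Frobenius–Euler generating function `((1-λ)/(exp t - λ))^s * exp (y t)`
gives back `F t * exp (y t)`, and the binomial convolution on the right is the coefficient
sequence of that product (Cauchy product). Exponential generating series that converge on a
punctured neighbourhood of `0` are power series of positive radius, so their coefficients are
determined by the sum, which identifies the two sides.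
-/

open Nat Finset

open Filter Topology

noncomputable def egfTerm (u : ℕ → ℝ) (t : ℝ) (n : ℕ) : ℝ := u n * t ^ n / (n ! : ℝ)

/-- Punctured at `0`, as in the statement: there the defining functions divide by
`b ^ 0 - a ^ 0 = 0`. -/
def HasEGF (u : ℕ → ℝ) (f : ℝ → ℝ) : Prop :=
  ∀ᶠ t in 𝓝[≠] (0 : ℝ), HasSum (egfTerm u t) (f t)

noncomputable def egfSeries (u : ℕ → ℝ) : FormalMultilinearSeries ℝ ℝ ℝ :=
  FormalMultilinearSeries.ofScalars ℝ fun n => u n / (n ! : ℝ)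

noncomputable def binomialConv (u v : ℕ → ℝ) (n : ℕ) : ℝ :=
  ∑ m ∈ range (n + 1), (n.choose m : ℝ) * u m * v (n - m)

lemma egfSeries_apply (u : ℕ → ℝ) (t : ℝ) (n : ℕ) :
    egfSeries u n (fun _ => t) = egfTerm u t n := by
  rw [egfSeries, FormalMultilinearSeries.ofScalars_apply_eq, smul_eq_mul, egfTerm]
  ring

lemma sum_range_egfTerm_mul_egfTerm (u v : ℕ → ℝ) (t : ℝ) (n : ℕ) :
    ∑ k ∈ range (n + 1), egfTerm u t k * egfTerm v t (n - k) = egfTerm (binomialConv u v) t n := by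
  simp only [egfTerm, binomialConv, Finset.sum_mul, Finset.sum_div]
  refine Finset.sum_congr rfl fun k hk => ?_
  have hkn : k ≤ n := Nat.lt_succ_iff.mp (Finset.mem_range.mp hk)
  rw [Nat.cast_choose ℝ hkn, ← pow_mul_pow_sub t hkn]
  field_simp

lemma hasEGF_of_forall_abs_lt {u : ℕ → ℝ} {f : ℝ → ℝ}
    (h : ∃ ε > 0, ∀ t : ℝ, t ≠ 0 → |t| < ε → HasSum (fun n => u n * t ^ n / (n ! : ℝ)) (f t)) :
    HasEGF u f := by
  obtain ⟨ε, hε, hsum⟩ := h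
  filter_upwards [self_mem_nhdsWithin, nhdsWithin_le_nhds (Metric.ball_mem_nhds 0 hε)]
    with t ht0 htε
  exact hsum t ht0 (by simpa using htε)

lemma exp_sub_pow_eq_sum (s : ℕ) (lam t : ℝ) :
    (Real.exp t - lam) ^ s =
      ∑ j ∈ range (s + 1), (s.choose j : ℝ) * (-lam) ^ (s - j) * Real.exp (j * t) := by
  rw [sub_eq_add_neg, add_pow]
  refine Finset.sum_congr rfl fun j _ => ?_
  rw [Real.exp_nat_mul]
  ring

namespace HasEGF

variable {u v : ℕ → ℝ} {f g : ℝ → ℝ}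

lemma congr (hu : HasEGF u f) (hfg : f =ᶠ[𝓝[≠] 0] g) : HasEGF u g := by
  filter_upwards [hu, hfg] with t ht hft
  rwa [← hft]

lemma const_mul (hu : HasEGF u f) (a : ℝ) : HasEGF (fun n => a * u n) (fun t => a * f t) := by
  filter_upwards [hu] with t ht
  have hterm : egfTerm (fun n => a * u n) t = fun n => a * egfTerm u t n := by
    funext n
    simp only [egfTerm]
    ring
  simpa only [hterm] using ht.mul_left a

lemma finset_sum {ι : Type*} (S : Finset ι) {u : ι → ℕ → ℝ} {f : ι → ℝ → ℝ}
    (h : ∀ i ∈ S, HasEGF (u i) (f i)) :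
    HasEGF (fun n => ∑ i ∈ S, u i n) (fun t => ∑ i ∈ S, f i t) := by
  filter_upwards [(eventually_all_finset S).2 h] with t ht
  convert hasSum_sum ht using 1
  ext n
  simp only [egfTerm, Finset.sum_mul, Finset.sum_div]

lemma radius_egfSeries_pos (hu : HasEGF u f) : 0 < (egfSeries u).radius := by
  obtain ⟨t, ht, ht0⟩ := (hu.and self_mem_nhdsWithin).exists
  refine lt_of_lt_of_le ?_ ((egfSeries u).le_radius_of_tendsto (r := ‖t‖₊) (l := 0) ?_)
  · simpa using ht0
  · convert ht.summable.tendsto_atTop_zero.norm using 1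
    · ext n
      simp only [egfSeries, FormalMultilinearSeries.ofScalars_norm, coe_nnnorm, egfTerm,
        norm_div, norm_mul, norm_pow]
      ring
    · simp

lemma eventually_summable_norm (hu : HasEGF u f) :
    ∀ᶠ t in 𝓝 0, Summable fun n => ‖egfTerm u t n‖ := by
  filter_upwards [Metric.eball_mem_nhds 0 hu.radius_egfSeries_pos] with t ht
  simpa only [egfSeries_apply] using (egfSeries u).summable_norm_apply ht

lemma mul (hu : HasEGF u f) (hv : HasEGF v g) :
    HasEGF (binomialConv u v) (fun t => f t * g t) := by
  filter_upwards [hu, hv, nhdsWithin_le_nhds hu.eventually_summable_norm,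
    nhdsWithin_le_nhds hv.eventually_summable_norm] with t hut hvt hut' hvt'
  have := hasSum_sum_range_mul_of_summable_norm hut' hvt'
  rw [hut.tsum_eq, hvt.tsum_eq] at this
  simpa only [sum_range_egfTerm_mul_egfTerm] using this

lemma unique (hu : HasEGF u f) (hv : HasEGF v f) : u = v := by
  have hps : ∀ {w : ℕ → ℝ}, HasEGF w f →
      HasFPowerSeriesAt (egfSeries w).sum (egfSeries w) 0 := fun hw =>
    ((egfSeries _).hasFPowerSeriesOnBall hw.radius_egfSeries_pos).hasFPowerSeriesAt
  have hsum : (egfSeries u).sum =ᶠ[𝓝[≠] 0] (egfSeries v).sum := by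
    filter_upwards [hu, hv] with t hut hvt
    simp only [FormalMultilinearSeries.sum, egfSeries_apply, hut.tsum_eq, hvt.tsum_eq]
  have hseries := (hps hu).eq_formalMultilinearSeries_of_eventually (hps hv)
    (((hps hu).continuousAt.eventuallyEq_nhds_iff_eventuallyEq_nhdsNE
      (hps hv).continuousAt).1 hsum)
  ext n
  have := egfSeries_apply u 1 n
  rw [hseries, egfSeries_apply] at this
  have hfac : (n ! : ℝ) ≠ 0 := by positivity
  exact (div_left_inj' hfac).1 (by simpa [egfTerm] using this.symm)

end HasEGF

theorem statement2_general
    (r : ℕ) (hr : 1 ≤ r) (k : Fin r → ℤ)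
    (a b : ℝ)
    (B : ℝ → ℝ → ℕ → ℝ)
    (hB : ∀ c : ℝ, 0 < c → ∀ x : ℝ, ∃ ε > 0, ∀ t : ℝ, t ≠ 0 → |t| < ε →
      HasSum (fun n : ℕ => B c x n * t ^ n / (n ! : ℝ))
        (multiPolylog r k (1 - (a * b) ^ (-t)) / (b ^ t - a ^ (-t)) ^ r *
          c ^ ((r : ℝ) * x * t)))
    (s : ℕ) (lam : ℝ) (hlam : lam ≠ 1)
    (H : ℝ → ℕ → ℝ)
    (hH : ∀ y : ℝ, ∃ ε > 0, ∀ t : ℝ, t ≠ 0 → |t| < ε →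
      HasSum (fun m : ℕ => H y m * t ^ m / (m ! : ℝ))
        (((1 - lam) / (Real.exp t - lam)) ^ s * Real.exp (y * t)))
    (c : ℝ) (hc : 0 < c) (x : ℝ) (n : ℕ) :
    B c x n = ∑ m ∈ Finset.range (n + 1), ((n.choose m : ℝ) / (1 - lam) ^ s) *
      ∑ j ∈ Finset.range (s + 1),
        (s.choose j : ℝ) * (-lam) ^ (s - j) *
          B (Real.exp 1) ((j : ℝ) / (r : ℝ)) (n - m) * H (x * (r : ℝ) * Real.log c) m := by
  set F : ℝ → ℝ := fun t => multiPolylog r k (1 - (a * b) ^ (-t)) / (b ^ t - a ^ (-t)) ^ r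
  set y := x * (r : ℝ) * Real.log c with hy
  have hBc : HasEGF (B c x) fun t => F t * Real.exp (y * t) := by
    convert hasEGF_of_forall_abs_lt (hB c hc x) using 4 with t
    rw [Real.rpow_def_of_pos hc, hy]
    ring_nf
  have hr0 : (r : ℝ) ≠ 0 := Nat.cast_ne_zero.2 (by omega)
  have hBj (j : ℕ) : HasEGF (B (Real.exp 1) (j / r)) fun t => F t * Real.exp (j * t) := by
    convert hasEGF_of_forall_abs_lt (hB _ (Real.exp_pos 1) (j / r)) using 4 with t
    rw [Real.exp_one_rpow]
    field_simp
  set A : ℕ → ℝ := fun q => ∑ j ∈ range (s + 1),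
    (s.choose j : ℝ) * (-lam) ^ (s - j) / (1 - lam) ^ s * B (Real.exp 1) (j / r) q
  have hA : HasEGF A fun t => F t * (Real.exp t - lam) ^ s / (1 - lam) ^ s := by
    refine (HasEGF.finset_sum _ fun j _ => (hBj j).const_mul _).congr (.of_forall fun t => ?_)
    simp only [exp_sub_pow_eq_sum, Finset.mul_sum, Finset.sum_div]
    exact Finset.sum_congr rfl fun j _ => by ring
  have hlam' : 1 - lam ≠ 0 := sub_ne_zero.2 hlam.symm
  have hexp : ∀ᶠ t in 𝓝[≠] 0, Real.exp t - lam ≠ 0 := nhdsWithin_le_nhds <|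
    (Real.continuous_exp.sub continuous_const).continuousAt.eventually_ne (by simpa using hlam')
  have hprod : HasEGF (binomialConv (H y) A) fun t => F t * Real.exp (y * t) :=
    ((hasEGF_of_forall_abs_lt (hH y)).mul hA).congr <| by
      filter_upwards [hexp] with t ht
      rw [div_pow]
      field_simp
  rw [hBc.unique hprod]
  simp only [binomialConv, A, Finset.mul_sum]
  exact Finset.sum_congr rfl fun m _ => Finset.sum_congr rfl fun j _ => by ring

/-- expression of the generalized multi poly-Bernoulli polynomials in terms of
higher-order Frobenius–Euler polynomials `H_m^{(s)}(y;λ)`. -/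
theorem statement2
    (r : ℕ) (hr : 1 ≤ r) (k : Fin r → ℤ)
    (a b : ℝ) (ha : 0 < a) (hb : 0 < b) (hab : 1 < a * b)
    (B : ℝ → ℝ → ℕ → ℝ)
    (hB : ∀ c : ℝ, 0 < c → ∀ x : ℝ, ∃ ε > 0, ∀ t : ℝ, t ≠ 0 → |t| < ε →
      HasSum (fun n : ℕ => B c x n * t ^ n / (n ! : ℝ))
        (multiPolylog r k (1 - (a * b) ^ (-t)) / (b ^ t - a ^ (-t)) ^ r *
          c ^ ((r : ℝ) * x * t)))
    (s : ℕ) (hs : 1 ≤ s) (lam : ℝ) (hlam : lam ≠ 1)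
    (H : ℝ → ℕ → ℝ)
    (hH : ∀ y : ℝ, ∃ ε > 0, ∀ t : ℝ, t ≠ 0 → |t| < ε →
      HasSum (fun m : ℕ => H y m * t ^ m / (m ! : ℝ))
        (((1 - lam) / (Real.exp t - lam)) ^ s * Real.exp (y * t)))
    (c : ℝ) (hc : 0 < c) (x : ℝ) (n : ℕ) :
    B c x n = ∑ m ∈ Finset.range (n + 1), ((n.choose m : ℝ) / (1 - lam) ^ s) *
      ∑ j ∈ Finset.range (s + 1),
        (s.choose j : ℝ) * (-lam) ^ (s - j) *
          B (Real.exp 1) ((j : ℝ) / (r : ℝ)) (n - m) * H (x * (r : ℝ) * Real.log c) m :=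
  statement2_general r hr k a b B hB s lam hlam H hH c hc x n
end

section
/- For every integer n ≥ 0, every integer r ≥ 1, all integers k_1,…,k_r, all positive reals a, b, c with ab > 1, and every real x, one has B_n^{(k_1,…,k_r)}(x;a,b,c) = (ln a + ln b)^n · B_n^{(k_1,…,k_r)}((x·ln c − ln b)/(ln a + ln b)), relating the three-parameter generalized multi poly-Bernoulli polynomials to the basic multi poly-Bernoulli polynomials B_n^{(k_1,…,k_r)}(x). -/
open Nat Finset

/-!
The substitution `t ↦ (log a + log b) t` turns one generating function into the other:
`(ab)^{-t} = e^{-(log a + log b) t}` and `b^t - a^{-t} = b^t (1 - (ab)^{-t})`, and the factor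
`b^{-rt}` coming from the denominator is absorbed into the shift of `x`. Comparing coefficients
then gives the identity; since both expansions are only known for `t ≠ 0`, uniqueness of the
coefficients goes through the isolated-zeros principle for analytic functions.
-/

open Filter Topology FormalMultilinearSeries

section PowerSeries

variable {𝕜 : Type*} [NontriviallyNormedField 𝕜]

theorem eq_zero_of_forall_hasSum_pow_zero [CompleteSpace 𝕜] {g : ℕ → 𝕜} {ε : ℝ} (hε : 0 < ε)
    (H : ∀ t : 𝕜, t ≠ 0 → ‖t‖ < ε → HasSum (fun n => g n * t ^ n) 0) : g = 0 := by
  set p := ofScalars 𝕜 g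
  obtain ⟨t₀, ht₀, ht₀ε⟩ := NormedField.exists_norm_lt 𝕜 hε
  have hrad : 0 < p.radius := by
    have hconv := (H t₀ (norm_pos_iff.mp ht₀) ht₀ε).summable.tendsto_atTop_zero.norm
    refine lt_of_lt_of_le (by simpa using ht₀) (p.le_radius_of_tendsto (r := ‖t₀‖₊) (l := 0) ?_)
    simpa [p, ofScalars_norm, norm_mul, norm_pow] using hconv
  have hp : HasFPowerSeriesAt p.sum p 0 := (p.hasFPowerSeriesOnBall hrad).hasFPowerSeriesAt
  have hzero : ∀ᶠ t in 𝓝[≠] (0 : 𝕜), p.sum t = 0 := by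
    filter_upwards [self_mem_nhdsWithin,
      mem_nhdsWithin_of_mem_nhds (Metric.ball_mem_nhds (0 : 𝕜) hε)] with t ht htε
    rw [show p.sum t = ∑' n, g n • t ^ n from ofScalars_sum_eq g t]
    exact (H t ht (by simpa using htε)).tsum_eq
  exact (ofScalars_series_eq_zero 𝕜).mp <| hp.locally_zero_iff.mp <|
    hp.analyticAt.frequently_zero_iff_eventually_zero.mp hzero.frequently

def HasEGFNearZero (f : ℕ → 𝕜) (F : 𝕜 → 𝕜) : Prop :=
  ∃ ε > 0, ∀ t : 𝕜, t ≠ 0 → ‖t‖ < ε → HasSum (fun n => f n * t ^ n / (n ! : 𝕜)) (F t)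

theorem HasEGFNearZero.eq_pow_mul_of_comp_mul [CompleteSpace 𝕜] [CharZero 𝕜]
    {f g : ℕ → 𝕜} {F G : 𝕜 → 𝕜} {L : 𝕜}
    (hf : HasEGFNearZero f F) (hg : HasEGFNearZero g G) (hL : L ≠ 0)
    (hFG : ∀ t, t ≠ 0 → F t = G (L * t)) (n : ℕ) : f n = L ^ n * g n := by
  obtain ⟨ε, hε, hf⟩ := hf
  obtain ⟨δ, hδ, hg⟩ := hg
  have hLpos : 0 < ‖L‖ := norm_pos_iff.mpr hL
  have hdiff : (fun n => (f n - L ^ n * g n) / (n ! : 𝕜)) = 0 := by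
    refine eq_zero_of_forall_hasSum_pow_zero (lt_min hε (div_pos hδ hLpos)) ?_
    intro t ht htε
    have hLt : ‖L * t‖ < δ := by
      rw [norm_mul, ← lt_div_iff₀' hLpos]; exact htε.trans_le (min_le_right _ _)
    have h := (hf t ht (htε.trans_le (min_le_left _ _))).sub (hg (L * t) (mul_ne_zero hL ht) hLt)
    rw [hFG t ht, sub_self] at h
    exact h.congr_fun fun n => by ring
  simpa [sub_eq_zero, Nat.factorial_ne_zero] using congr_fun hdiff n

end PowerSeries

section MultiPolyBernoulli

open Real

noncomputable def multiPolyBernoulliGF (r : ℕ) (k : Fin r → ℤ) (x t : ℝ) : ℝ :=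
  multiPolylog r k (1 - exp (-t)) / (1 - exp (-t)) ^ r * exp (r * x * t)

noncomputable def genMultiPolyBernoulliGF (r : ℕ) (k : Fin r → ℤ) (a b c x t : ℝ) : ℝ :=
  multiPolylog r k (1 - (a * b) ^ (-t)) / (b ^ t - a ^ (-t)) ^ r * c ^ ((r : ℝ) * x * t)

theorem rpow_sub_rpow_neg_eq {a b : ℝ} (ha : 0 < a) (hb : 0 < b) (t : ℝ) :
    b ^ t - a ^ (-t) = exp (log b * t) * (1 - exp (-((log a + log b) * t))) := by
  rw [rpow_def_of_pos hb, rpow_def_of_pos ha, mul_sub, mul_one, ← exp_add]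
  ring_nf

theorem genMultiPolyBernoulliGF_eq {a b c : ℝ} (ha : 0 < a) (hb : 0 < b) (hc : 0 < c)
    (hL : log a + log b ≠ 0) (r : ℕ) (k : Fin r → ℤ) (x t : ℝ) :
    genMultiPolyBernoulliGF r k a b c x t =
      multiPolyBernoulliGF r k ((x * log c - log b) / (log a + log b)) ((log a + log b) * t) := by
  have hab : (a * b) ^ (-t) = exp (-((log a + log b) * t)) := by
    rw [rpow_def_of_pos (mul_pos ha hb), log_mul ha.ne' hb.ne']; ring_nf
  have hc' : c ^ ((r : ℝ) * x * t) = exp (r * log b * t) *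
      exp (r * ((x * log c - log b) / (log a + log b)) * ((log a + log b) * t)) := by
    rw [rpow_def_of_pos hc, ← exp_add]
    congr 1
    field_simp
    ring
  rw [genMultiPolyBernoulliGF, multiPolyBernoulliGF, hab, rpow_sub_rpow_neg_eq ha hb, hc',
    mul_pow, ← exp_nat_mul]
  have := exp_ne_zero (r * (log b * t))
  field_simp

end MultiPolyBernoulli

theorem statement5_general
    (r : ℕ) (k : Fin r → ℤ)
    (a b : ℝ) (ha : 0 < a) (hb : 0 < b) (hab : 1 < a * b)
    (B : ℝ → ℝ → ℕ → ℝ)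
    (hB : ∀ c : ℝ, 0 < c → ∀ x : ℝ, ∃ ε > 0, ∀ t : ℝ, t ≠ 0 → |t| < ε →
      HasSum (fun n : ℕ => B c x n * t ^ n / (n ! : ℝ))
        (multiPolylog r k (1 - (a * b) ^ (-t)) / (b ^ t - a ^ (-t)) ^ r *
          c ^ ((r : ℝ) * x * t)))
    (B0 : ℝ → ℕ → ℝ)
    (hB0 : ∀ x : ℝ, ∃ ε > 0, ∀ t : ℝ, t ≠ 0 → |t| < ε →
      HasSum (fun n : ℕ => B0 x n * t ^ n / (n ! : ℝ))
        (multiPolylog r k (1 - Real.exp (-t)) / (1 - Real.exp (-t)) ^ r *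
          Real.exp ((r : ℝ) * x * t)))
    (c : ℝ) (hc : 0 < c) (x : ℝ) (n : ℕ) :
    B c x n = (Real.log a + Real.log b) ^ n *
      B0 ((x * Real.log c - Real.log b) / (Real.log a + Real.log b)) n := by
  have hL : Real.log a + Real.log b ≠ 0 := by
    rw [← Real.log_mul ha.ne' hb.ne']; exact (Real.log_pos hab).ne'
  have hgen : HasEGFNearZero (B c x) (genMultiPolyBernoulliGF r k a b c x) := hB c hc x
  have hbasic : ∀ y, HasEGFNearZero (B0 y) (multiPolyBernoulliGF r k y) := hB0
  exact hgen.eq_pow_mul_of_comp_mul (hbasic _) hL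
    (fun t _ => genMultiPolyBernoulliGF_eq ha hb hc hL r k x t) n

/-- `B_n^{(k_1,…,k_r)}(x;a,b,c) = (ln a + ln b)^n ·
B_n^{(k_1,…,k_r)}((x ln c − ln b)/(ln a + ln b))`, where `B_n^{(k_1,…,k_r)}(x)` are the basic
multi poly-Bernoulli polynomials with e.g.f. `Li(1−e^{−t})/(1−e^{−t})^r · e^{rxt}`. -/
theorem statement5
    (r : ℕ) (hr : 1 ≤ r) (k : Fin r → ℤ)
    (a b : ℝ) (ha : 0 < a) (hb : 0 < b) (hab : 1 < a * b)
    (B : ℝ → ℝ → ℕ → ℝ)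
    (hB : ∀ c : ℝ, 0 < c → ∀ x : ℝ, ∃ ε > 0, ∀ t : ℝ, t ≠ 0 → |t| < ε →
      HasSum (fun n : ℕ => B c x n * t ^ n / (n ! : ℝ))
        (multiPolylog r k (1 - (a * b) ^ (-t)) / (b ^ t - a ^ (-t)) ^ r *
          c ^ ((r : ℝ) * x * t)))
    (B0 : ℝ → ℕ → ℝ)
    (hB0 : ∀ x : ℝ, ∃ ε > 0, ∀ t : ℝ, t ≠ 0 → |t| < ε →
      HasSum (fun n : ℕ => B0 x n * t ^ n / (n ! : ℝ))
        (multiPolylog r k (1 - Real.exp (-t)) / (1 - Real.exp (-t)) ^ r *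
          Real.exp ((r : ℝ) * x * t)))
    (c : ℝ) (hc : 0 < c) (x : ℝ) (n : ℕ) :
    B c x n = (Real.log a + Real.log b) ^ n *
      B0 ((x * Real.log c - Real.log b) / (Real.log a + Real.log b)) n :=
  statement5_general r k a b ha hb hab B hB B0 hB0 c hc x n
end

section
/- For every integer n ≥ 0, every integer r ≥ 1, all integers k_1,…,k_r, and all positive reals a, b, c with ab > 1, the polynomial function x ↦ B_{n+1}^{(k_1,…,k_r)}(x;a,b,c) satisfies the derivative identity (d/dx) B_{n+1}^{(k_1,…,k_r)}(x;a,b,c) = (n+1)·(r·ln c)·B_n^{(k_1,…,k_r)}(x;a,b,c) for all real x. -/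
/-!
Multiplying the generating function at `x` by `exp (L (y - x) t)`, with `L = r log c`, gives the
generating function at `y`. By the Cauchy product and uniqueness of power series coefficients,
`B_m(y) = ∑_{i+j=m} (m choose i) B_i(x) (L (y - x))^j`, a polynomial in `y - x` whose linear
coefficient is `(m choose 1) L B_{m-1}(x)`.
-/

open Nat Finset

open Filter Topology

theorem Real.hasSum_pow_div_factorial_exp (x : ℝ) :
    HasSum (fun n => x ^ n / n !) (Real.exp x) := by
  rw [Real.exp_eq_exp_ℝ]
  exact NormedSpace.expSeries_div_hasSum_exp x

theorem HasSum.egf_mul {a b : ℕ → ℝ} {t A B : ℝ}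
    (ha : HasSum (fun n => a n * t ^ n / n !) A) (hb : HasSum (fun n => b n * t ^ n / n !) B) :
    HasSum (fun n => (∑ p ∈ antidiagonal n, n.choose p.1 * a p.1 * b p.2) * t ^ n / n !)
      (A * B) := by
  have hcauchy := hasSum_sum_range_mul_of_summable_norm ha.summable.norm hb.summable.norm
  rw [ha.tsum_eq, hb.tsum_eq] at hcauchy
  refine hcauchy.congr_fun fun n => ?_
  rw [← Nat.sum_antidiagonal_eq_sum_range_succ
    (fun i j => a i * t ^ i / i ! * (b j * t ^ j / j !)), sum_mul, sum_div]
  refine sum_congr rfl fun p hp => ?_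
  obtain rfl := mem_antidiagonal.1 hp
  rw [Nat.cast_add_choose, pow_add]
  field_simp

theorem eq_zero_of_hasSum_mul_pow_eq_zero {f : ℕ → ℝ} {ε : ℝ} (hε : 0 < ε)
    (h : ∀ t : ℝ, t ≠ 0 → |t| < ε → HasSum (fun n => f n * t ^ n) 0) : f = 0 := by
  set p := FormalMultilinearSeries.ofScalars ℝ f
  have hsum : ∀ t : ℝ, t ≠ 0 → |t| < ε → p.sum t = 0 := fun t ht htε => by
    have := FormalMultilinearSeries.ofScalars_sum_eq f t
    simp only [FormalMultilinearSeries.ofScalarsSum, smul_eq_mul] at this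
    rw [this, (h t ht htε).tsum_eq]
  have hrad : 0 < p.radius := by
    have hε2 : (0 : ℝ) < ε / 2 := by positivity
    have hsummable : Summable fun n => ‖p n‖ * ((ε / 2).toNNReal : ℝ) ^ n := by
      have := (h (ε / 2) hε2.ne' (by rw [abs_of_pos hε2]; linarith)).summable.norm
      simpa only [p, FormalMultilinearSeries.ofScalars_norm, Real.coe_toNNReal _ hε2.le, norm_mul,
        norm_pow, Real.norm_of_nonneg hε2.le] using this
    exact lt_of_lt_of_le (by simpa using hε2) (p.le_radius_of_summable hsummable)
  have hp : HasFPowerSeriesAt p.sum p 0 := (p.hasFPowerSeriesOnBall hrad).hasFPowerSeriesAt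
  have hzero_nhdsNE : p.sum =ᶠ[𝓝[≠] 0] 0 := by
    filter_upwards [nhdsWithin_le_nhds (Metric.ball_mem_nhds (0 : ℝ) hε), self_mem_nhdsWithin]
      with t htε ht
    exact hsum t ht (by simpa using htε)
  have hzero_nhds : p.sum =ᶠ[𝓝 0] 0 :=
    (hp.continuousAt.eventuallyEq_nhds_iff_eventuallyEq_nhdsNE continuousAt_const).1 hzero_nhdsNE
  exact (FormalMultilinearSeries.ofScalars_series_eq_zero ℝ (c := f)).1
    (hp.eq_zero_of_eventually hzero_nhds)

theorem eq_of_hasSum_egf {f g : ℕ → ℝ} {ε : ℝ} (hε : 0 < ε)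
    (h : ∀ t : ℝ, t ≠ 0 → |t| < ε → ∃ S, HasSum (fun n => f n * t ^ n / n !) S ∧
      HasSum (fun n => g n * t ^ n / n !) S) : f = g := by
  have hzero : (fun n => (f n - g n) / n !) = 0 := by
    refine eq_zero_of_hasSum_mul_pow_eq_zero hε fun t ht htε => ?_
    obtain ⟨S, hf, hg⟩ := h t ht htε
    simpa only [sub_self, ← sub_div, ← sub_mul, div_mul_eq_mul_div] using hf.sub hg
  funext n
  have hn := congrFun hzero n
  rw [Pi.zero_apply, div_eq_zero_iff, sub_eq_zero] at hn
  exact hn.resolve_right (Nat.cast_ne_zero.2 n.factorial_ne_zero)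

theorem hasDerivAt_mul_sub_pow_self (L x : ℝ) (k : ℕ) :
    HasDerivAt (fun y => (L * (y - x)) ^ k) (if k = 1 then L else 0) x := by
  have hlin : HasDerivAt (fun y => L * (y - x)) L x := by
    simpa using ((hasDerivAt_id x).sub_const x).const_mul L
  refine (hlin.pow k).congr_deriv ?_
  rcases k with _ | _ | k <;> simp

theorem hasDerivAt_of_forall_eq_sum_antidiagonal {f : ℝ → ℝ} {C : ℕ × ℕ → ℝ} {L x : ℝ} {n : ℕ}
    (hf : ∀ y, f y = ∑ p ∈ antidiagonal (n + 1), C p * (L * (y - x)) ^ p.2) :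
    HasDerivAt f (C (n, 1) * L) x := by
  rw [funext hf]
  refine (HasDerivAt.fun_sum (u := antidiagonal (n + 1))
    fun p _ => (hasDerivAt_mul_sub_pow_self L x p.2).const_mul (C p)).congr_deriv ?_
  rw [sum_eq_single (n, 1)]
  · simp
  · intro p hp hpn
    have : p.2 ≠ 1 := fun h1 => hpn (Prod.ext (by have := mem_antidiagonal.1 hp; omega) h1)
    simp [this]
  · simp

def HasAppellEGF (B : ℝ → ℕ → ℝ) (A : ℝ → ℝ) (L : ℝ) : Prop :=
  ∀ x, ∃ ε > 0, ∀ t : ℝ, t ≠ 0 → |t| < ε →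
    HasSum (fun n => B x n * t ^ n / n !) (A t * Real.exp (L * x * t))

namespace HasAppellEGF

variable {A : ℝ → ℝ} {B : ℝ → ℕ → ℝ} {L : ℝ}

theorem shift (hB : HasAppellEGF B A L) (x y : ℝ) :
    B y = fun m => ∑ p ∈ antidiagonal m, m.choose p.1 * B x p.1 * (L * (y - x)) ^ p.2 := by
  obtain ⟨εx, hεx, hx⟩ := hB x
  obtain ⟨εy, hεy, hy⟩ := hB y
  refine eq_of_hasSum_egf (lt_min hεx hεy) fun t ht htε => ?_
  have hexp : HasSum (fun n => (L * (y - x)) ^ n * t ^ n / n !) (Real.exp (L * (y - x) * t)) := by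
    simpa only [mul_pow] using Real.hasSum_pow_div_factorial_exp (L * (y - x) * t)
  refine ⟨_, hy t ht (htε.trans_le (min_le_right _ _)), ?_⟩
  convert (hx t ht (htε.trans_le (min_le_left _ _))).egf_mul hexp using 1
  rw [mul_assoc (A t), ← Real.exp_add]
  ring_nf

theorem hasDerivAt (hB : HasAppellEGF B A L) (n : ℕ) (x : ℝ) :
    HasDerivAt (fun y => B y (n + 1)) ((n + 1) * L * B x n) x := by
  refine (hasDerivAt_of_forall_eq_sum_antidiagonal fun y =>
    congrFun (hB.shift x y) (n + 1)).congr_deriv ?_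
  push_cast [Nat.choose_succ_self_right]
  ring

end HasAppellEGF

theorem statement6_general
    (r : ℕ) (k : Fin r → ℤ)
    (a b : ℝ)
    (B : ℝ → ℝ → ℕ → ℝ)
    (hB : ∀ c : ℝ, 0 < c → ∀ x : ℝ, ∃ ε > 0, ∀ t : ℝ, t ≠ 0 → |t| < ε →
      HasSum (fun n : ℕ => B c x n * t ^ n / (n ! : ℝ))
        (multiPolylog r k (1 - (a * b) ^ (-t)) / (b ^ t - a ^ (-t)) ^ r *
          c ^ ((r : ℝ) * x * t)))
    (c : ℝ) (hc : 0 < c) (n : ℕ) :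
    ∀ x : ℝ, HasDerivAt (fun y : ℝ => B c y (n + 1))
      (((n : ℝ) + 1) * ((r : ℝ) * Real.log c) * B c x n) x := by
  have hAppell : HasAppellEGF (B c)
      (fun t => multiPolylog r k (1 - (a * b) ^ (-t)) / (b ^ t - a ^ (-t)) ^ r)
      (r * Real.log c) := by
    intro x
    obtain ⟨ε, hε, h⟩ := hB c hc x
    refine ⟨ε, hε, fun t ht htε => ?_⟩
    convert h t ht htε using 2
    rw [Real.rpow_def_of_pos hc]
    ring_nf
  exact hAppell.hasDerivAt n

/-- `(d/dx) B_{n+1}^{(k_1,…,k_r)}(x;a,b,c) = (n+1)(r ln c) B_n^{(k_1,…,k_r)}(x;a,b,c)`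
for all real `x`. -/
theorem statement6
    (r : ℕ) (hr : 1 ≤ r) (k : Fin r → ℤ)
    (a b : ℝ) (ha : 0 < a) (hb : 0 < b) (hab : 1 < a * b)
    (B : ℝ → ℝ → ℕ → ℝ)
    (hB : ∀ c : ℝ, 0 < c → ∀ x : ℝ, ∃ ε > 0, ∀ t : ℝ, t ≠ 0 → |t| < ε →
      HasSum (fun n : ℕ => B c x n * t ^ n / (n ! : ℝ))
        (multiPolylog r k (1 - (a * b) ^ (-t)) / (b ^ t - a ^ (-t)) ^ r *
          c ^ ((r : ℝ) * x * t)))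
    (c : ℝ) (hc : 0 < c) (n : ℕ) :
    ∀ x : ℝ, HasDerivAt (fun y : ℝ => B c y (n + 1))
      (((n : ℝ) + 1) * ((r : ℝ) * Real.log c) * B c x n) x :=
  statement6_general r k a b B hB c hc n
end

section
/- (Addition formula, two-parameter case) For every integer n ≥ 0, every integer r ≥ 1, all integers k_1,…,k_r, all positive reals a, b with ab > 1, and all reals x, y, one has B_n^{(k_1,…,k_r)}(x+y;a,b) = ∑_{i=0}^{n} C(n,i) r^{n−i} B_i^{(k_1,…,k_r)}(x;a,b) y^{n−i}. -/
/-! The generating function of `B (x + y)` is that of `B x` times `exp (r y t)`. Expanding this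
product as a Cauchy product of absolutely convergent power series and comparing coefficients gives
the formula; the coefficients are determined by the sum on a punctured neighbourhood of `0` by the
principle of isolated zeros. -/

open Nat Finset

open Filter Topology FormalMultilinearSeries
open scoped ENNReal

section PowerSeries

variable {𝕜 : Type*} [NontriviallyNormedField 𝕜] {c d : ℕ → 𝕜}

lemma le_radius_ofScalars_of_summable {t : 𝕜} (h : Summable fun n => c n * t ^ n) :
    (‖t‖₊ : ℝ≥0∞) ≤ (ofScalars 𝕜 c).radius :=
  (ofScalars 𝕜 c).le_radius_of_tendsto (l := 0) <| by
    simpa [norm_mul, norm_pow] using h.tendsto_atTop_zero.norm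

lemma ofScalars_radius_pos_of_frequently_summable
    (h : ∃ᶠ t in 𝓝[≠] (0 : 𝕜), Summable fun n => c n * t ^ n) :
    0 < (ofScalars 𝕜 c).radius := by
  obtain ⟨t, ht, ht0⟩ := (h.and_eventually self_mem_nhdsWithin).exists
  exact lt_of_lt_of_le (by simpa using ht0) (le_radius_ofScalars_of_summable ht)

lemma eventually_summable_norm_mul_pow
    (h : ∃ᶠ t in 𝓝[≠] (0 : 𝕜), Summable fun n => c n * t ^ n) :
    ∀ᶠ t in 𝓝 (0 : 𝕜), Summable fun n => ‖c n * t ^ n‖ := by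
  filter_upwards [Metric.eball_mem_nhds 0 (ofScalars_radius_pos_of_frequently_summable h)]
    with t ht
  simpa only [ofScalars_apply_eq, smul_eq_mul] using (ofScalars 𝕜 c).summable_norm_apply ht

lemma eq_zero_of_eventually_hasSum_mul_pow_zero [CompleteSpace 𝕜]
    (h : ∀ᶠ t in 𝓝[≠] (0 : 𝕜), HasSum (fun n => c n * t ^ n) 0) : c = 0 := by
  have hp : HasFPowerSeriesAt (ofScalarsSum (E := 𝕜) c) (ofScalars 𝕜 c) 0 :=
    ((ofScalars 𝕜 c).hasFPowerSeriesOnBall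
      (ofScalars_radius_pos_of_frequently_summable (h.mono fun _ ht => ht.summable).frequently)
      ).hasFPowerSeriesAt
  have hzero : ∀ᶠ t in 𝓝 0, ofScalarsSum (E := 𝕜) c t = 0 :=
    hp.analyticAt.frequently_zero_iff_eventually_zero.mp <| Eventually.frequently <|
      h.mono fun t ht => by simpa [ofScalars_sum_eq] using ht.tsum_eq
  exact (ofScalars_series_eq_zero 𝕜).mp (hp.eq_zero_of_eventually hzero)

lemma eq_of_eventually_hasSum_mul_pow [CompleteSpace 𝕜] {f : 𝕜 → 𝕜}
    (hc : ∀ᶠ t in 𝓝[≠] (0 : 𝕜), HasSum (fun n => c n * t ^ n) (f t))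
    (hd : ∀ᶠ t in 𝓝[≠] (0 : 𝕜), HasSum (fun n => d n * t ^ n) (f t)) : c = d :=
  sub_eq_zero.mp <| eq_zero_of_eventually_hasSum_mul_pow_zero <|
    (hc.and hd).mono fun _ ⟨h₁, h₂⟩ => by simpa [sub_mul] using h₁.sub h₂

lemma HasSum.mul_pow_antidiagonal [CompleteSpace 𝕜] {t F G : 𝕜}
    (hc : HasSum (fun n => c n * t ^ n) F) (hd : HasSum (fun n => d n * t ^ n) G)
    (hc' : Summable fun n => ‖c n * t ^ n‖) (hd' : Summable fun n => ‖d n * t ^ n‖) :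
    HasSum (fun n => (∑ p ∈ antidiagonal n, c p.1 * d p.2) * t ^ n) (F * G) := by
  have hterm : (fun n => (∑ p ∈ antidiagonal n, c p.1 * d p.2) * t ^ n) =
      fun n => ∑ p ∈ antidiagonal n, c p.1 * t ^ p.1 * (d p.2 * t ^ p.2) := by
    ext n
    rw [sum_mul]
    refine sum_congr rfl fun p hp => ?_
    rw [← mem_antidiagonal.mp hp, pow_add]
    ring
  rw [hterm, ← hc.tsum_eq, ← hd.tsum_eq,
    tsum_mul_tsum_eq_tsum_sum_antidiagonal_of_summable_norm hc' hd']
  exact (summable_norm_sum_mul_antidiagonal_of_summable_norm hc' hd').of_norm.hasSum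

end PowerSeries

lemma hasSum_pow_div_factorial_mul_pow (s t : ℝ) :
    HasSum (fun n => s ^ n / n ! * t ^ n) (Real.exp (s * t)) := by
  have hterm : (fun n => s ^ n / n ! * t ^ n) = fun n => (s * t) ^ n / n ! := by
    ext n
    ring
  rw [hterm, Real.exp_eq_exp_ℝ]
  exact NormedSpace.expSeries_div_hasSum_exp (s * t)

lemma sum_antidiagonal_div_factorial_mul_div_factorial (u v : ℕ → ℝ) (n : ℕ) :
    ∑ p ∈ antidiagonal n, u p.1 / p.1 ! * (v p.2 / p.2 !) =
      (∑ i ∈ range (n + 1), n.choose i * u i * v (n - i)) / n ! := by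
  rw [Nat.sum_antidiagonal_eq_sum_range_succ_mk, sum_div]
  refine sum_congr rfl fun i hi => ?_
  rw [Nat.cast_choose ℝ (Nat.lt_succ_iff.mp (mem_range.mp hi))]
  field_simp

theorem statement8_general
    (r : ℕ) (k : Fin r → ℤ)
    (a b : ℝ)
    (B : ℝ → ℕ → ℝ)
    (hB : ∀ x : ℝ, ∃ ε > 0, ∀ t : ℝ, t ≠ 0 → |t| < ε →
      HasSum (fun n : ℕ => B x n * t ^ n / (n ! : ℝ))
        (multiPolylog r k (1 - (a * b) ^ (-t)) / (b ^ t - a ^ (-t)) ^ r *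
          Real.exp ((r : ℝ) * x * t)))
    (x y : ℝ) (n : ℕ) :
    B (x + y) n = ∑ i ∈ Finset.range (n + 1),
      (n.choose i : ℝ) * (r : ℝ) ^ (n - i) * B x i * y ^ (n - i) := by
  set L : ℝ → ℝ := fun t => multiPolylog r k (1 - (a * b) ^ (-t)) / (b ^ t - a ^ (-t)) ^ r
  have hgen : ∀ z, ∀ᶠ t in 𝓝[≠] (0 : ℝ),
      HasSum (fun n => B z n / n ! * t ^ n) (L t * Real.exp (r * z * t)) := by
    intro z
    obtain ⟨ε, hε, h⟩ := hB z
    filter_upwards [self_mem_nhdsWithin, nhdsWithin_le_nhds (Metric.ball_mem_nhds 0 hε)]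
      with t ht htε
    convert h t ht (by simpa using htε) using 2 with n
    ring
  have hprod : ∀ᶠ t in 𝓝[≠] (0 : ℝ),
      HasSum (fun n => (∑ p ∈ antidiagonal n, B x p.1 / p.1 ! * ((r * y) ^ p.2 / p.2 !)) * t ^ n)
        (L t * Real.exp (r * (x + y) * t)) := by
    have hc := eventually_summable_norm_mul_pow ((hgen x).mono fun _ h => h.summable).frequently
    have hd := eventually_summable_norm_mul_pow (c := fun n => (r * y) ^ n / n !)
      (Frequently.of_forall fun t => (hasSum_pow_div_factorial_mul_pow _ t).summable)
    filter_upwards [hgen x, nhdsWithin_le_nhds hc, nhdsWithin_le_nhds hd] with t hct hc' hd'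
    have h := hct.mul_pow_antidiagonal (hasSum_pow_div_factorial_mul_pow _ t) hc' hd'
    rwa [mul_assoc, ← Real.exp_add, ← add_mul, ← mul_add] at h
  have hcoeff := congrFun (eq_of_eventually_hasSum_mul_pow (hgen (x + y)) hprod) n
  rw [sum_antidiagonal_div_factorial_mul_div_factorial, div_left_inj' (by positivity)] at hcoeff
  rw [hcoeff]
  refine sum_congr rfl fun i _ => ?_
  ring

/-- Addition formula, two-parameter case:
`B_n^{(k_1,…,k_r)}(x+y;a,b) = ∑_{i=0}^{n} C(n,i) r^{n-i} B_i^{(k_1,…,k_r)}(x;a,b) y^{n-i}`. -/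
theorem statement8
    (r : ℕ) (hr : 1 ≤ r) (k : Fin r → ℤ)
    (a b : ℝ) (ha : 0 < a) (hb : 0 < b) (hab : 1 < a * b)
    (B : ℝ → ℕ → ℝ)
    (hB : ∀ x : ℝ, ∃ ε > 0, ∀ t : ℝ, t ≠ 0 → |t| < ε →
      HasSum (fun n : ℕ => B x n * t ^ n / (n ! : ℝ))
        (multiPolylog r k (1 - (a * b) ^ (-t)) / (b ^ t - a ^ (-t)) ^ r *
          Real.exp ((r : ℝ) * x * t)))
    (x y : ℝ) (n : ℕ) :
    B (x + y) n = ∑ i ∈ Finset.range (n + 1),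
      (n.choose i : ℝ) * (r : ℝ) ^ (n - i) * B x i * y ^ (n - i) :=
  statement8_general r k a b B hB x y n
end

section
/- (Multiplication formula) For every integer n ≥ 0, every integer r ≥ 1, all integers k_1,…,k_r, all positive reals a, b, c with ab > 1, every real x and every real m, one has B_n^{(k_1,…,k_r)}(m·x;a,b,c) = ∑_{i=0}^{n} C(n,i) (r·ln c)^{n−i} (m−1)^{n−i} x^{n−i} B_i^{(k_1,…,k_r)}(x;a,b,c). -/
open Nat Finset

/-! Since `c ^ (r (m x) t) = c ^ (r x t) * exp (r log c (m - 1) x t)`, the generating function at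
`m x` is the one at `x` times an exponential. Multiplying exponential generating functions
convolves their coefficients binomially, and a power series is determined by its sums on a
punctured neighbourhood of `0` (identity theorem), which yields the formula coefficientwise. -/

open Filter Topology

theorem eventually_nhdsNE_zero_of_forall_abs_lt {p : ℝ → Prop} {ε : ℝ} (hε : 0 < ε)
    (h : ∀ t, t ≠ 0 → |t| < ε → p t) : ∀ᶠ t in 𝓝[≠] 0, p t :=
  eventually_nhdsWithin_iff.2 <| Metric.eventually_nhds_iff.2
    ⟨ε, hε, fun t ht ht₀ => h t ht₀ (by simpa using ht)⟩

section PowerSeries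

variable {𝕜 : Type*}

theorem summable_norm_mul_pow_of_summable_mul_pow [NormedField 𝕜] {a : ℕ → 𝕜} {s t : 𝕜}
    (hs : Summable fun n => a n * s ^ n) (hts : ‖t‖ < ‖s‖) :
    Summable fun n => ‖a n * t ^ n‖ := by
  have hs₀ : 0 < ‖s‖ := (norm_nonneg t).trans_lt hts
  obtain ⟨M, hM⟩ := hs.tendsto_atTop_zero.norm.bddAbove_range
  refine .of_nonneg_of_le (fun _ => norm_nonneg _) (fun n => ?_)
    ((summable_geometric_of_lt_one (by positivity) ((div_lt_one hs₀).2 hts)).mul_left M)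
  calc ‖a n * t ^ n‖ = ‖a n * s ^ n‖ * (‖t‖ / ‖s‖) ^ n := by
        rw [norm_mul, norm_mul, norm_pow, norm_pow, div_pow, mul_assoc,
          mul_div_cancel₀ _ (pow_ne_zero n hs₀.ne')]
    _ ≤ M * (‖t‖ / ‖s‖) ^ n := by gcongr; exact hM ⟨n, rfl⟩

theorem eq_of_hasSum_mul_pow_nhdsNE [NontriviallyNormedField 𝕜] {a b : ℕ → 𝕜} {f : 𝕜 → 𝕜}
    (ha : ∀ᶠ t in 𝓝[≠] 0, HasSum (fun n => a n * t ^ n) (f t))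
    (hb : ∀ᶠ t in 𝓝[≠] 0, HasSum (fun n => b n * t ^ n) (f t)) : a = b := by
  classical
  set g : 𝕜 → 𝕜 := fun t => if t = 0 then a 0 - b 0 else 0
  -- The sums are unknown at `t = 0`, where only the constant term of `a - b` survives.
  have hg : HasFPowerSeriesAt g (FormalMultilinearSeries.ofScalars 𝕜 (a - b)) 0 := by
    rw [hasFPowerSeriesAt_iff]
    filter_upwards [eventually_nhdsWithin_iff.1 (ha.and hb)] with t ht
    simp only [FormalMultilinearSeries.coeff_ofScalars, zero_add, Pi.sub_apply, smul_eq_mul]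
    rcases eq_or_ne t 0 with rfl | ht₀
    · rw [show g 0 = a 0 - b 0 from if_pos rfl]
      refine (hasSum_ite_eq 0 (a 0 - b 0)).congr_fun fun n => ?_
      rcases eq_or_ne n 0 with rfl | hn <;> simp [*]
    · rw [show g t = f t - f t from (if_neg ht₀).trans (sub_self _).symm]
      exact ((ht ht₀).1.sub (ht ht₀).2).congr_fun fun n => by ring
  have hg₀ : ∀ᶠ t in 𝓝 0, g t = 0 :=
    hg.analyticAt.frequently_zero_iff_eventually_zero.1 <|
      (eventually_nhdsWithin_of_forall (s := {0}ᶜ) fun t ht => if_neg ht).frequently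
  exact sub_eq_zero.1 <|
    (FormalMultilinearSeries.ofScalars_series_eq_zero 𝕜).1 (hg.eq_zero_of_eventually hg₀)

theorem eq_of_hasSum_egf_nhdsNE [NontriviallyNormedField 𝕜] [CharZero 𝕜] {a b : ℕ → 𝕜}
    {f : 𝕜 → 𝕜} (ha : ∀ᶠ t in 𝓝[≠] 0, HasSum (fun n => a n * t ^ n / (n ! : 𝕜)) (f t))
    (hb : ∀ᶠ t in 𝓝[≠] 0, HasSum (fun n => b n * t ^ n / (n ! : 𝕜)) (f t)) : a = b := by
  simp_rw [mul_div_right_comm _ (_ ^ _)] at ha hb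
  funext n
  exact (div_left_inj' (Nat.cast_ne_zero.2 n.factorial_ne_zero)).1
    (congrFun (eq_of_hasSum_mul_pow_nhdsNE ha hb) n)

theorem summable_norm_egf_of_forall_summable {a : ℕ → ℝ} {ε t : ℝ}
    (h : ∀ s, s ≠ 0 → |s| < ε → Summable fun n => a n * s ^ n / (n ! : ℝ)) (ht : |t| < ε) :
    Summable fun n => ‖a n * t ^ n / (n ! : ℝ)‖ := by
  obtain ⟨s, hts, hsε⟩ := exists_between ht
  have hs₀ : 0 < s := (abs_nonneg t).trans_lt hts
  have hs : Summable fun n => a n / n ! * s ^ n := by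
    simpa only [mul_div_right_comm] using h s hs₀.ne' (by rwa [abs_of_pos hs₀])
  simpa only [mul_div_right_comm] using
    summable_norm_mul_pow_of_summable_mul_pow hs
      (by rwa [Real.norm_eq_abs, Real.norm_of_nonneg hs₀.le])

theorem HasSum.egf_mul_exp {a : ℕ → ℝ} {t A : ℝ} (L : ℝ)
    (ha : HasSum (fun n => a n * t ^ n / (n ! : ℝ)) A)
    (ha' : Summable fun n => ‖a n * t ^ n / (n ! : ℝ)‖) :
    HasSum (fun n => (∑ i ∈ range (n + 1), n.choose i * a i * L ^ (n - i)) * t ^ n / (n ! : ℝ))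
      (A * Real.exp (L * t)) := by
  have hexp : HasSum (fun n => (L * t) ^ n / (n ! : ℝ)) (Real.exp (L * t)) := by
    rw [Real.exp_eq_exp_ℝ]; exact NormedSpace.expSeries_div_hasSum_exp (L * t)
  have hexp' : Summable fun n => ‖(L * t) ^ n / (n ! : ℝ)‖ := by
    simpa [abs_mul] using Real.summable_pow_div_factorial |L * t|
  rw [← ha.tsum_eq, ← hexp.tsum_eq]
  refine (hasSum_sum_range_mul_of_summable_norm ha' hexp').congr_fun fun n => ?_
  rw [sum_mul, sum_div]
  refine sum_congr rfl fun i hi => ?_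
  have hin := mem_range_succ_iff.mp hi
  rw [Nat.cast_choose ℝ hin, mul_pow, ← Nat.sub_add_cancel hin, pow_add, Nat.add_sub_cancel]
  field_simp

end PowerSeries

theorem statement10_general
    (r : ℕ) (k : Fin r → ℤ)
    (a b : ℝ)
    (B : ℝ → ℝ → ℕ → ℝ)
    (hB : ∀ c : ℝ, 0 < c → ∀ x : ℝ, ∃ ε > 0, ∀ t : ℝ, t ≠ 0 → |t| < ε →
      HasSum (fun n : ℕ => B c x n * t ^ n / (n ! : ℝ))
        (multiPolylog r k (1 - (a * b) ^ (-t)) / (b ^ t - a ^ (-t)) ^ r *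
          c ^ ((r : ℝ) * x * t)))
    (c : ℝ) (hc : 0 < c) (x m : ℝ) (n : ℕ) :
    B c (m * x) n = ∑ i ∈ Finset.range (n + 1),
      (n.choose i : ℝ) * ((r : ℝ) * Real.log c) ^ (n - i) * (m - 1) ^ (n - i) * x ^ (n - i) *
        B c x i := by
  set L : ℝ := r * Real.log c * (m - 1) * x with hL
  set F : ℝ → ℝ := fun t => multiPolylog r k (1 - (a * b) ^ (-t)) / (b ^ t - a ^ (-t)) ^ r
  obtain ⟨ε, hε, hx⟩ := hB c hc x
  obtain ⟨ε', hε', hmx⟩ := hB c hc (m * x)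
  have hscale (t : ℝ) : c ^ ((r : ℝ) * (m * x) * t) = c ^ ((r : ℝ) * x * t) * Real.exp (L * t) := by
    rw [Real.rpow_def_of_pos hc, Real.rpow_def_of_pos hc, ← Real.exp_add]
    congr 1
    ring
  have hconv : ∀ t, t ≠ 0 → |t| < ε → HasSum
      (fun n => (∑ i ∈ range (n + 1), n.choose i * B c x i * L ^ (n - i)) * t ^ n / (n ! : ℝ))
      (F t * c ^ ((r : ℝ) * (m * x) * t)) := fun t ht htε => by
    rw [hscale, ← mul_assoc]
    exact (hx t ht htε).egf_mul_exp L
      (summable_norm_egf_of_forall_summable (fun s hs hsε => (hx s hs hsε).summable) htε)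
  rw [congrFun (eq_of_hasSum_egf_nhdsNE (eventually_nhdsNE_zero_of_forall_abs_lt hε' hmx)
    (eventually_nhdsNE_zero_of_forall_abs_lt hε hconv)) n]
  refine sum_congr rfl fun i _ => ?_
  rw [hL, mul_pow, mul_pow]
  ring

/-- Multiplication formula: `B_n^{(k_1,…,k_r)}(m·x;a,b,c) =
∑_{i=0}^{n} C(n,i) (r ln c)^{n-i} (m-1)^{n-i} x^{n-i} B_i^{(k_1,…,k_r)}(x;a,b,c)`. -/
theorem statement10
    (r : ℕ) (hr : 1 ≤ r) (k : Fin r → ℤ)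
    (a b : ℝ) (ha : 0 < a) (hb : 0 < b) (hab : 1 < a * b)
    (B : ℝ → ℝ → ℕ → ℝ)
    (hB : ∀ c : ℝ, 0 < c → ∀ x : ℝ, ∃ ε > 0, ∀ t : ℝ, t ≠ 0 → |t| < ε →
      HasSum (fun n : ℕ => B c x n * t ^ n / (n ! : ℝ))
        (multiPolylog r k (1 - (a * b) ^ (-t)) / (b ^ t - a ^ (-t)) ^ r *
          c ^ ((r : ℝ) * x * t)))
    (c : ℝ) (hc : 0 < c) (x m : ℝ) (n : ℕ) :
    B c (m * x) n = ∑ i ∈ Finset.range (n + 1),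
      (n.choose i : ℝ) * ((r : ℝ) * Real.log c) ^ (n - i) * (m - 1) ^ (n - i) * x ^ (n - i) *
        B c x i :=
  statement10_general r k a b B hB c hc x m n
end
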